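/- arXiv:1712.03691 — 7 statements merged into one kernel-verified Lean document; each statement's English description precedes it below -/
import Mathlib

section
/- In a triangle ABC all of whose angles are less than 120°, there exists a unique interior point M such that each of the angles ∠AMB, ∠BMC, ∠CMA equals 120°. -/
/-!
The Fermat point is the minimiser `M` of `f x = dist x A + dist x B + dist x C`, which exists
because `f` is coercive. Away from the vertices `f` is differentiable with gradient the sum of the
three unit vectors from `A`, `B`, `C` to `M`, and three unit vectors sum to zero exactly when their
pairwise angles are `2π/3`. At a vertex whose angle is less than `2π/3`, moving into the triangle
along the bisector decreases `f` at a positive rate, so the minimum is not a vertex. Conversely,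
since each distance is convex, a point where the gradient vanishes is a strict global minimum,
which gives uniqueness. The barycentric coordinates of `M` are proportional to the reciprocals of
its distances to the vertices, hence positive, so `M` is interior.
-/

open EuclideanGeometry Real Filter Set
open scoped RealInnerProductSpace

noncomputable section

variable {E : Type*} [NormedAddCommGroup E] [InnerProductSpace ℝ E]

section UnitVectors

variable {u v w : E}

lemma cos_two_pi_div_three : cos (2 * π / 3) = -(1 / 2) := by
  rw [show 2 * π / 3 = π - π / 3 by ring, cos_pi_sub, cos_pi_div_three]

lemma arccos_neg_one_half : arccos (-(1 / 2)) = 2 * π / 3 :=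
  arccos_eq_of_eq_cos (by positivity) (by linarith [pi_pos]) cos_two_pi_div_three.symm

lemma angle_eq_arccos_inner_of_norm_eq_one (hu : ‖u‖ = 1) (hv : ‖v‖ = 1) :
    InnerProductGeometry.angle u v = arccos ⟪u, v⟫ := by
  simp [InnerProductGeometry.angle, hu, hv]

lemma two_pi_div_three_le_angle_iff (hu : ‖u‖ = 1) (hv : ‖v‖ = 1) :
    2 * π / 3 ≤ InnerProductGeometry.angle u v ↔ ⟪u, v⟫ ≤ -(1 / 2) := by
  rw [angle_eq_arccos_inner_of_norm_eq_one hu hv, ← arccos_neg_one_half]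
  refine ⟨fun h => ?_, fun h => arccos_le_arccos h⟩
  by_contra! hlt
  have hle : ⟪u, v⟫ ≤ 1 := by simpa [hu, hv] using real_inner_le_norm u v
  exact (arccos_lt_arccos (by norm_num) hlt hle).not_ge h

lemma angle_eq_two_pi_div_three_iff (hu : ‖u‖ = 1) (hv : ‖v‖ = 1) :
    InnerProductGeometry.angle u v = 2 * π / 3 ↔ ⟪u, v⟫ = -(1 / 2) := by
  refine ⟨fun h => ?_, fun h => by rw [angle_eq_arccos_inner_of_norm_eq_one hu hv, h,
    arccos_neg_one_half]⟩
  simpa [hu, hv, h, cos_two_pi_div_three] using (InnerProductGeometry.cos_angle u v).symm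

lemma add_add_eq_zero_iff_inner_eq (hu : ‖u‖ = 1) (hv : ‖v‖ = 1) (hw : ‖w‖ = 1) :
    u + v + w = 0 ↔
      ⟪u, v⟫ = -(1 / 2) ∧ ⟪v, w⟫ = -(1 / 2) ∧ ⟪w, u⟫ = -(1 / 2) := by
  have hpair (a b c : E) (ha : ‖a‖ = 1) (hb : ‖b‖ = 1) (hc : ‖c‖ = 1) (h : a + b + c = 0) :
      ⟪a, b⟫ = -(1 / 2) := by
    have h1 : ‖a + b‖ ^ 2 = 1 := by rw [eq_neg_of_add_eq_zero_left h, norm_neg, hc, one_pow]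
    rw [norm_add_sq_real, ha, hb] at h1
    linarith
  refine ⟨fun h => ⟨hpair u v w hu hv hw h, hpair v w u hv hw hu ?_, hpair w u v hw hu hv ?_⟩,
    fun ⟨huv, hvw, hwu⟩ => ?_⟩
  · rw [← h]; abel
  · rw [← h]; abel
  · rw [← norm_eq_zero, ← sq_eq_zero_iff, norm_add_sq_real, norm_add_sq_real,
      inner_add_left, hu, hv, hw, huv, hvw, real_inner_comm w u, hwu]
    ring

end UnitVectors

lemma ne_of_angle_eq_two_pi_div_three {A M B : E} (h : ∠ A M B = 2 * π / 3) : M ≠ A := by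
  rintro rfl
  rw [angle_self_left] at h
  linarith [pi_pos]

def distGrad (P x : E) : E := ‖x - P‖⁻¹ • (x - P)

section DistGrad

variable {P Q x : E}

lemma norm_distGrad (h : x ≠ P) : ‖distGrad P x‖ = 1 :=
  norm_smul_inv_norm (sub_ne_zero.2 h)

lemma dist_smul_distGrad (h : x ≠ P) : dist x P • distGrad P x = x - P := by
  rw [distGrad, smul_smul, dist_eq_norm, mul_inv_cancel₀ (norm_ne_zero_iff.2 (sub_ne_zero.2 h)),
    one_smul]

lemma inner_distGrad_self : ⟪distGrad P x, x - P⟫ = dist x P := by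
  rw [distGrad, real_inner_smul_left, real_inner_self_eq_norm_sq, dist_eq_norm]
  rcases eq_or_ne ‖x - P‖ 0 with h | h
  · simp [h]
  · field_simp

lemma angle_distGrad (hP : x ≠ P) (hQ : x ≠ Q) :
    InnerProductGeometry.angle (distGrad P x) (distGrad Q x) = ∠ P x Q := by
  have hP' : 0 < ‖x - P‖⁻¹ := inv_pos.2 (norm_pos_iff.2 (sub_ne_zero.2 hP))
  have hQ' : 0 < ‖x - Q‖⁻¹ := inv_pos.2 (norm_pos_iff.2 (sub_ne_zero.2 hQ))
  rw [distGrad, distGrad, InnerProductGeometry.angle_smul_left_of_pos _ _ hP',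
    InnerProductGeometry.angle_smul_right_of_pos _ _ hQ', EuclideanGeometry.angle, vsub_eq_sub,
    vsub_eq_sub, ← InnerProductGeometry.angle_neg_neg, neg_sub, neg_sub]

lemma hasFDerivAt_dist_const (h : x ≠ P) :
    HasFDerivAt (fun y => dist y P) (innerSL ℝ (distGrad P x)) x := by
  have hsq := ((hasFDerivAt_id x).sub_const P).norm_sq
  have hpos : 0 < ‖x - P‖ := norm_pos_iff.2 (sub_ne_zero.2 h)
  convert hsq.sqrt (by positivity) using 1
  · ext y
    rw [dist_eq_norm, sqrt_sq (norm_nonneg _), id]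
  · ext v
    simp only [distGrad, map_smul, smul_apply, coe_innerSL_apply, smul_eq_mul, id_eq,
      sqrt_sq hpos.le, ContinuousLinearMap.comp_id, nsmul_eq_mul, Nat.cast_ofNat]
    field_simp

lemma dist_add_inner_distGrad (y : E) :
    dist x P + ⟪distGrad P x, y - x⟫ = ⟪distGrad P x, y - P⟫ := by
  rw [← inner_distGrad_self, ← inner_add_right, sub_add_sub_cancel']

lemma dist_add_inner_distGrad_le (h : x ≠ P) (y : E) :
    dist x P + ⟪distGrad P x, y - x⟫ ≤ dist y P := by
  calc dist x P + ⟪distGrad P x, y - x⟫ = ⟪distGrad P x, y - P⟫ := dist_add_inner_distGrad y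
    _ ≤ ‖distGrad P x‖ * ‖y - P‖ := real_inner_le_norm _ _
    _ = dist y P := by rw [norm_distGrad h, one_mul, dist_eq_norm]

lemma sub_eq_smul_distGrad_of_dist_le {y : E} (h : x ≠ P)
    (hle : dist y P ≤ dist x P + ⟪distGrad P x, y - x⟫) :
    y - x = (dist y P - dist x P) • distGrad P x := by
  have heq : ⟪distGrad P x, y - P⟫ = ‖distGrad P x‖ * ‖y - P‖ := by
    rw [norm_distGrad h, one_mul, ← dist_eq_norm]
    have := dist_add_inner_distGrad_le h y
    rw [dist_add_inner_distGrad] at hle this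
    linarith
  have hy : dist y P • distGrad P x = y - P := by
    simpa [norm_distGrad h, dist_eq_norm] using inner_eq_norm_mul_iff_real.1 heq
  rw [sub_smul, hy, dist_smul_distGrad h, sub_sub_sub_cancel_right]

end DistGrad

/-- Moving from `a` along `-g` changes the function at rate `‖g‖ - ‖g‖ ^ 2`. -/
lemma norm_le_one_of_isLocalMin_dist_add {φ : E → ℝ} {a g : E}
    (hφ : HasFDerivAt φ (innerSL ℝ g) a) (hmin : IsLocalMin (fun x => dist x a + φ x) a) :
    ‖g‖ ≤ 1 := by
  set k : ℝ → ℝ := fun t => t * ‖g‖ + φ (a - t • g)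
  have hline : HasDerivAt (fun t : ℝ => a - t • g) (-g) 0 := by
    simpa using ((hasDerivAt_id (0 : ℝ)).smul_const g).const_sub a
  have hk : HasDerivAt k (‖g‖ - ‖g‖ ^ 2) 0 := by
    have hφ' : HasFDerivAt φ (innerSL ℝ g) (a - (0 : ℝ) • g) := by simpa using hφ
    refine (((hasDerivAt_id (0 : ℝ)).mul_const ‖g‖).add
      (hφ'.comp_hasDerivAt 0 hline)).congr_deriv ?_
    simp [sub_eq_add_neg]
  have hkmin : IsLocalMinOn k (Ici 0) 0 := by
    have hmin' : IsLocalMin (fun x => dist x a + φ x) (a - (0 : ℝ) • g) := by simpa using hmin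
    refine ((hmin'.comp_continuous (g := fun t : ℝ => a - t • g) (by fun_prop)).on
      (Ici 0)).congr ?_ self_mem_Ici
    filter_upwards [self_mem_nhdsWithin] with t (ht : 0 ≤ t)
    simp [k, dist_eq_norm, norm_smul, abs_of_nonneg ht]
  have hseg : segment ℝ (0 : ℝ) (0 + 1) ⊆ Ici 0 := by
    rw [segment_eq_Icc (by norm_num)]; exact Icc_subset_Ici_self
  have := hkmin.hasFDerivWithinAt_nonneg hk.hasFDerivAt.hasFDerivWithinAt
    (mem_posTangentConeAt_of_segment_subset hseg)
  simp only [ContinuousLinearMap.toSpanSingleton_apply, smul_eq_mul, one_mul, sub_nonneg] at this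
  nlinarith [norm_nonneg g]

section Metric

variable {X : Type*} [PseudoMetricSpace X]

def distSum (A B C x : X) : ℝ := dist x A + dist x B + dist x C

lemma distSum_comm_left (A B C : X) : distSum B A C = distSum A B C := by
  funext x; simp only [distSum]; ring

lemma distSum_comm_outer (A B C : X) : distSum C B A = distSum A B C := by
  funext x; simp only [distSum]; ring

lemma exists_forall_distSum_le [ProperSpace X] (A B C : X) :
    ∃ M, ∀ x, distSum A B C M ≤ distSum A B C x := by
  have : Nonempty X := ⟨A⟩
  refine Continuous.exists_forall_le (by unfold distSum; fun_prop) ?_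
  refine tendsto_atTop_mono (fun x => ?_) (tendsto_dist_right_cocompact_atTop A)
  simp only [distSum]
  linarith [dist_nonneg (x := x) (y := B), dist_nonneg (x := x) (y := C)]

end Metric

section DistSum

variable {A B C M : E}

lemma hasFDerivAt_distSum (hA : M ≠ A) (hB : M ≠ B) (hC : M ≠ C) :
    HasFDerivAt (distSum A B C) (innerSL ℝ (distGrad A M + distGrad B M + distGrad C M)) M := by
  rw [map_add, map_add]
  exact ((hasFDerivAt_dist_const hA).add (hasFDerivAt_dist_const hB)).add
    (hasFDerivAt_dist_const hC)

lemma sum_distGrad_eq_zero_of_isLocalMin (hA : M ≠ A) (hB : M ≠ B) (hC : M ≠ C)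
    (hmin : IsLocalMin (distSum A B C) M) :
    distGrad A M + distGrad B M + distGrad C M = 0 := by
  rw [← norm_eq_zero, ← innerSL_apply_norm ℝ,
    hmin.hasFDerivAt_eq_zero (hasFDerivAt_distSum hA hB hC), norm_zero]

lemma two_pi_div_three_le_angle_of_isLocalMin_distSum (hAB : A ≠ B) (hAC : A ≠ C)
    (hmin : IsLocalMin (distSum A B C) A) : 2 * π / 3 ≤ ∠ B A C := by
  have hB := norm_distGrad hAB
  have hC := norm_distGrad hAC
  have hle : ‖distGrad B A + distGrad C A‖ ≤ 1 := by
    refine norm_le_one_of_isLocalMin_dist_add (φ := fun x => dist x B + dist x C) ?_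
      (by unfold distSum at hmin; simpa only [add_assoc] using hmin)
    rw [map_add]
    exact (hasFDerivAt_dist_const hAB).add (hasFDerivAt_dist_const hAC)
  rw [← angle_distGrad hAB hAC, two_pi_div_three_le_angle_iff hB hC]
  have hsq := pow_le_one₀ (n := 2) (norm_nonneg _) hle
  rw [norm_add_sq_real, hB, hC] at hsq
  linarith

lemma sum_distGrad_eq_zero_iff (hA : M ≠ A) (hB : M ≠ B) (hC : M ≠ C) :
    distGrad A M + distGrad B M + distGrad C M = 0 ↔
      ∠ A M B = 2 * π / 3 ∧ ∠ B M C = 2 * π / 3 ∧ ∠ C M A = 2 * π / 3 := by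
  have hA' := norm_distGrad hA
  have hB' := norm_distGrad hB
  have hC' := norm_distGrad hC
  rw [add_add_eq_zero_iff_inner_eq hA' hB' hC', ← angle_distGrad hA hB, ← angle_distGrad hB hC,
    ← angle_distGrad hC hA, angle_eq_two_pi_div_three_iff hA' hB',
    angle_eq_two_pi_div_three_iff hB' hC', angle_eq_two_pi_div_three_iff hC' hA']

lemma distSum_lt_of_sum_distGrad_eq_zero (hA : M ≠ A) (hB : M ≠ B) (hC : M ≠ C)
    (hS : distGrad A M + distGrad B M + distGrad C M = 0) {y : E} (hy : y ≠ M) :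
    distSum A B C M < distSum A B C y := by
  -- Equality in the supporting-hyperplane inequalities at `A` and `B` puts `y - M` on the lines
  -- spanned by `distGrad A M` and `distGrad B M`, which meet only at `0`.
  by_contra! hle
  have hsum : ⟪distGrad A M, y - M⟫ + ⟪distGrad B M, y - M⟫ + ⟪distGrad C M, y - M⟫ = 0 := by
    rw [← inner_add_left, ← inner_add_left, hS, inner_zero_left]
  have gA := dist_add_inner_distGrad_le hA y
  have gB := dist_add_inner_distGrad_le hB y
  have gC := dist_add_inner_distGrad_le hC y
  simp only [distSum] at hle
  obtain ⟨s, hs⟩ : ∃ s : ℝ, y - M = s • distGrad A M :=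
    ⟨_, sub_eq_smul_distGrad_of_dist_le hA (by linarith)⟩
  obtain ⟨t, ht⟩ : ∃ t : ℝ, y - M = t • distGrad B M :=
    ⟨_, sub_eq_smul_distGrad_of_dist_le hB (by linarith)⟩
  have hAB := ((add_add_eq_zero_iff_inner_eq (norm_distGrad hA) (norm_distGrad hB)
    (norm_distGrad hC)).1 hS).1
  have hAA : ⟪distGrad A M, distGrad A M⟫ = 1 := by
    rw [real_inner_self_eq_norm_sq, norm_distGrad hA, one_pow]
  have hBB : ⟪distGrad B M, distGrad B M⟫ = 1 := by
    rw [real_inner_self_eq_norm_sq, norm_distGrad hB, one_pow]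
  have h1 := congrArg (⟪distGrad A M, ·⟫) (hs.symm.trans ht)
  have h2 := congrArg (⟪distGrad B M, ·⟫) (hs.symm.trans ht)
  simp only [real_inner_smul_right, hAA, hBB, hAB, real_inner_comm (distGrad A M)] at h1 h2
  have hs0 : s = 0 := by linarith
  exact hy (sub_eq_zero.1 (by rw [hs, hs0, zero_smul]))

end DistSum

lemma mem_interior_convexHull_of_sum_smul_sub_eq_zero {V ι : Type*} [NormedAddCommGroup V]
    [NormedSpace ℝ V] [FiniteDimensional ℝ V] [Fintype ι] {p : ι → V}
    (hp : AffineIndependent ℝ p) (hcard : Fintype.card ι = Module.finrank ℝ V + 1)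
    {c : ι → ℝ} (hc : ∀ i, 0 < c i) {x : V} (hx : ∑ i, c i • (x - p i) = 0) :
    x ∈ interior (convexHull ℝ (range p)) := by
  let b : AffineBasis ι ℝ V := ⟨p, hp, hp.affineSpan_eq_top_iff_card_eq_finrank_add_one.2 hcard⟩
  have : Nonempty ι := Fintype.card_pos_iff.1 (by omega)
  set σ := ∑ i, c i
  have hσ : 0 < σ := Finset.sum_pos (fun i _ => hc i) Finset.univ_nonempty
  have hw : ∑ i, c i / σ = 1 := by rw [← Finset.sum_div, div_self hσ.ne']
  have hcomb : Finset.univ.affineCombination ℝ p (fun i => c i / σ) = x := by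
    rw [Finset.affineCombination_eq_weightedVSubOfPoint_vadd_of_sum_eq_one _ _ _ hw x,
      Finset.weightedVSubOfPoint_apply]
    simp only [vsub_eq_sub, vadd_eq_add, div_eq_inv_mul, mul_smul, ← Finset.smul_sum, ← neg_sub x,
      smul_neg, Finset.sum_neg_distrib, hx, neg_zero, smul_zero, zero_add]
  change x ∈ interior (convexHull ℝ (range b))
  rw [b.interior_convexHull]
  intro i
  rw [← hcomb]
  exact (b.coord_apply_combination_of_mem (Finset.mem_univ i) hw).trans_gt (div_pos (hc i) hσ)

lemma mem_interior_convexHull_of_sum_distGrad_eq_zero [FiniteDimensional ℝ E] {A B C M : E}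
    (hABC : AffineIndependent ℝ ![A, B, C]) (hdim : Module.finrank ℝ E = 2)
    (hA : M ≠ A) (hB : M ≠ B) (hC : M ≠ C)
    (hS : distGrad A M + distGrad B M + distGrad C M = 0) :
    M ∈ interior (convexHull ℝ {A, B, C}) := by
  have hpos (P : E) (h : M ≠ P) : 0 < ‖M - P‖⁻¹ := inv_pos.2 (norm_pos_iff.2 (sub_ne_zero.2 h))
  have := mem_interior_convexHull_of_sum_smul_sub_eq_zero hABC (by simp [hdim])
    (c := ![‖M - A‖⁻¹, ‖M - B‖⁻¹, ‖M - C‖⁻¹])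
    (fun i => by fin_cases i <;> simp [hpos, hA, hB, hC])
    (x := M) (by rw [Fin.sum_univ_three]; exact hS)
  rwa [Matrix.range_cons, Matrix.range_cons_cons_empty, Set.singleton_union] at this

end

theorem fermat_point_exists_unique (A B C : EuclideanSpace ℝ (Fin 2))
    (hABC : AffineIndependent ℝ ![A, B, C])
    (hA : ∠ B A C < 2 * Real.pi / 3)
    (hB : ∠ A B C < 2 * Real.pi / 3)
    (hC : ∠ B C A < 2 * Real.pi / 3) :
    ∃! M : EuclideanSpace ℝ (Fin 2),
      M ∈ interior (convexHull ℝ {A, B, C}) ∧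
      ∠ A M B = 2 * Real.pi / 3 ∧ ∠ B M C = 2 * Real.pi / 3 ∧
      ∠ C M A = 2 * Real.pi / 3 := by
  have hAB : A ≠ B := hABC.injective.ne (show (0 : Fin 3) ≠ 1 by decide)
  have hAC : A ≠ C := hABC.injective.ne (show (0 : Fin 3) ≠ 2 by decide)
  have hBC : B ≠ C := hABC.injective.ne (show (1 : Fin 3) ≠ 2 by decide)
  obtain ⟨M, hM⟩ := exists_forall_distSum_le A B C
  have hmin : IsLocalMin (distSum A B C) M := Eventually.of_forall hM
  have hMA : M ≠ A := by
    rintro rfl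
    exact (two_pi_div_three_le_angle_of_isLocalMin_distSum hAB hAC hmin).not_gt hA
  have hMB : M ≠ B := by
    rintro rfl
    rw [← distSum_comm_left] at hmin
    exact (two_pi_div_three_le_angle_of_isLocalMin_distSum hAB.symm hBC hmin).not_gt hB
  have hMC : M ≠ C := by
    rintro rfl
    rw [← distSum_comm_outer] at hmin
    exact (two_pi_div_three_le_angle_of_isLocalMin_distSum hBC.symm hAC.symm hmin).not_gt hC
  have hS := sum_distGrad_eq_zero_of_isLocalMin hMA hMB hMC hmin
  refine ⟨M, ⟨mem_interior_convexHull_of_sum_distGrad_eq_zero hABC finrank_euclideanSpace_fin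
    hMA hMB hMC hS, (sum_distGrad_eq_zero_iff hMA hMB hMC).1 hS⟩, ?_⟩
  rintro M' ⟨-, h₁, h₂, h₃⟩
  have hM'A := ne_of_angle_eq_two_pi_div_three h₁
  have hM'B := ne_of_angle_eq_two_pi_div_three h₂
  have hM'C := ne_of_angle_eq_two_pi_div_three h₃
  have hS' := (sum_distGrad_eq_zero_iff hM'A hM'B hM'C).2 ⟨h₁, h₂, h₃⟩
  by_contra hne
  exact (distSum_lt_of_sum_distGrad_eq_zero hMA hMB hMC hS hne).not_gt
    (distSum_lt_of_sum_distGrad_eq_zero hM'A hM'B hM'C hS' (Ne.symm hne))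
end

section
/- Let ABC be a triangle with all angles less than 120°, and erect equilateral triangles ARB, BPC, ACQ externally on its sides. Then the three lines AP, BQ, CR are concurrent, meeting at the Fermat point M of ABC. -/
/-!
Put the unit vectors `u`, `v`, `w` from `M` towards `A`, `B`, `C`; the three angles of `2π/3`
force `u + v + w = 0`. Writing `B = M + b v` and `C = M + c w`, the point `M + (b + c)(v + w)`,
on the ray from `A` through `M`, is at distance `BC` from both `B` and `C` (a rotation by `π/3`),
and it lies on the other side of `BC` than `A`. In the plane there are only two such points,
mirror images in `BC`, so it is the apex `P` of the equilateral triangle, and `M ∈ AP`.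
-/

open EuclideanGeometry RealInnerProductSpace Module Real

theorem sbtw_smul_vadd_smul_vadd_smul_vadd {R V P : Type*} [Field R] [LinearOrder R]
    [IsStrictOrderedRing R] [AddCommGroup V] [Module R V] [AddTorsor V P] {v : V} (hv : v ≠ 0)
    (p : P) {r₁ r₂ r₃ : R} (h₁₂ : r₁ < r₂) (h₂₃ : r₂ < r₃) :
    Sbtw R (r₁ • v +ᵥ p) (r₂ • v +ᵥ p) (r₃ • v +ᵥ p) := by
  have h₁₃ : r₃ - r₁ ≠ 0 := by linarith
  have hline : AffineMap.lineMap (r₁ • v +ᵥ p) (r₃ • v +ᵥ p) ((r₂ - r₁) / (r₃ - r₁)) =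
      r₂ • v +ᵥ p := by
    rw [AffineMap.lineMap_apply, vadd_vsub_vadd_cancel_right, vadd_vadd, ← sub_smul, smul_smul,
      ← add_smul, div_mul_cancel₀ _ h₁₃, sub_add_cancel]
  rw [← hline, sbtw_lineMap_iff]
  refine ⟨fun h => hv ?_, div_pos (by linarith) (by linarith), ?_⟩
  · rw [vadd_right_cancel_iff, ← sub_eq_zero, ← sub_smul, smul_eq_zero] at h
    exact h.resolve_left (sub_neg.2 (h₁₂.trans h₂₃)).ne
  · rw [div_lt_one (by linarith)]; linarith

section
variable {V : Type*} [NormedAddCommGroup V] [InnerProductSpace ℝ V]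

theorem real_inner_inv_norm_smul_eq_neg_half {x y : V}
    (h : InnerProductGeometry.angle x y = 2 * π / 3) :
    ⟪‖x‖⁻¹ • x, ‖y‖⁻¹ • y⟫ = -1 / 2 :=
  calc ⟪‖x‖⁻¹ • x, ‖y‖⁻¹ • y⟫ = ⟪x, y⟫ / (‖x‖ * ‖y‖) := by
        rw [real_inner_smul_left, real_inner_smul_right]; ring
    _ = cos (2 * π / 3) := by rw [← h, InnerProductGeometry.cos_angle]
    _ = -1 / 2 := by
        rw [show 2 * π / 3 = π - π / 3 by ring, cos_pi_sub, cos_pi_div_three]; ring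

theorem add_add_eq_zero_of_real_inner_eq_neg_half {u v w : V} (hu : ‖u‖ = 1) (hv : ‖v‖ = 1)
    (hw : ‖w‖ = 1) (huv : ⟪u, v⟫ = -1 / 2) (hvw : ⟪v, w⟫ = -1 / 2) (hwu : ⟪w, u⟫ = -1 / 2) :
    u + v + w = 0 := by
  rw [← inner_self_eq_zero (𝕜 := ℝ)]
  simp only [inner_add_left, inner_add_right, real_inner_self_eq_norm_sq, hu, hv, hw, huv, hvw,
    hwu, real_inner_comm u v, real_inner_comm v w, real_inner_comm w u]
  norm_num

theorem norm_smul_add_smul_eq_norm_smul_sub_smul {v w : V} (hv : ‖v‖ = 1) (hw : ‖w‖ = 1)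
    (hvw : ⟪v, w⟫ = -1 / 2) (b c : ℝ) : ‖c • v + (b + c) • w‖ = ‖b • v - c • w‖ := by
  have hvv : ⟪v, v⟫ = 1 := by rw [real_inner_self_eq_norm_sq, hv, one_pow]
  have hww : ⟪w, w⟫ = 1 := by rw [real_inner_self_eq_norm_sq, hw, one_pow]
  rw [← sq_eq_sq₀ (norm_nonneg _) (norm_nonneg _), ← real_inner_self_eq_norm_sq,
    ← real_inner_self_eq_norm_sq]
  simp only [inner_add_left, inner_add_right, inner_sub_left, inner_sub_right,
    real_inner_smul_left, real_inner_smul_right, hvv, hww, hvw, real_inner_comm v w]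
  ring

end

section
variable {V P : Type*} [NormedAddCommGroup V] [InnerProductSpace ℝ V] [MetricSpace P]
  [NormedAddTorsor V P] [FiniteDimensional ℝ V]

theorem eq_of_dist_eq_of_dist_eq_of_sSameSide (hd : finrank ℝ V = 2)
    {c₁ c₂ p₁ p₂ : P} (hc : c₁ ≠ c₂) (h₁ : dist p₁ c₁ = dist p₂ c₁)
    (h₂ : dist p₁ c₂ = dist p₂ c₂) (hs : line[ℝ, c₁, c₂].SSameSide p₁ p₂) : p₁ = p₂ := by
  set s := line[ℝ, c₁, c₂]
  have hc₁ : c₁ ∈ s := left_mem_affineSpan_pair ℝ c₁ c₂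
  have hc₂ : c₂ ∈ s := right_mem_affineSpan_pair ℝ c₁ c₂
  have hne : reflection s p₂ ≠ p₂ := mt (reflection_eq_self_iff p₂).1 hs.2.2
  have hopp : s.SOppSide p₂ (reflection s p₂) := by
    rw [reflection_apply']
    exact AffineSubspace.sOppSide_pointReflection (SetLike.coe_mem _) hs.2.2
  -- the two circles about `c₁`, `c₂` through `p₂` meet only in `p₂` and its mirror image
  rcases eq_of_dist_eq_of_dist_eq_of_finrank_eq_two hd hc hne.symm rfl
    (by rw [dist_comm, dist_reflection_eq_of_mem s hc₁, dist_comm]) h₁ rfl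
    (by rw [dist_comm, dist_reflection_eq_of_mem s hc₂, dist_comm]) h₂ with h | h
  · exact h
  · exact absurd (h ▸ hs.trans_sOppSide hopp) (AffineSubspace.not_sOppSide_self s _)

theorem eq_smul_vadd_of_dist_eq_of_sOppSide (hd : finrank ℝ V = 2) {v w : V} (hv : ‖v‖ = 1)
    (hw : ‖w‖ = 1) (hvw : ⟪v, w⟫ = -1 / 2) {a b c : ℝ} (ha : 0 < a) (hb : 0 < b) (hc : 0 < c)
    {M A B C D : P}
    (hA : A = (-a) • (v + w) +ᵥ M) (hB : B = b • v +ᵥ M) (hC : C = c • w +ᵥ M)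
    (hBD : dist B D = dist B C) (hCD : dist C D = dist B C) (hD : line[ℝ, B, C].SOppSide D A) :
    D = (b + c) • (v + w) +ᵥ M := by
  have hwv : ⟪w, v⟫ = -1 / 2 := by rw [real_inner_comm, hvw]
  have hBC : B ≠ C := by
    rw [hB, hC]
    intro h
    have h' := congrArg (fun x => ⟪x, v⟫) (vadd_right_cancel M h)
    simp only [real_inner_smul_left, real_inner_self_eq_norm_sq, hv, hwv] at h'
    linarith
  have hBD₀ : dist B ((b + c) • (v + w) +ᵥ M) = dist B C := by
    rw [hB, hC, dist_vadd_cancel_right, dist_vadd_cancel_right, dist_eq_norm, dist_eq_norm,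
      ← norm_smul_add_smul_eq_norm_smul_sub_smul hv hw hvw, ← norm_neg]
    congr 1
    module
  have hCD₀ : dist C ((b + c) • (v + w) +ᵥ M) = dist B C := by
    rw [hB, hC, dist_vadd_cancel_right, dist_vadd_cancel_right, dist_eq_norm, dist_eq_norm,
      norm_sub_rev (b • v), ← norm_smul_add_smul_eq_norm_smul_sub_smul hw hv hwv, ← norm_neg]
    congr 1
    module
  -- where the line through `A` and `M` crosses `BC`
  have hX : (b * c / (b + c)) • (v + w) +ᵥ M ∈ line[ℝ, B, C] := by
    convert AffineMap.lineMap_mem_affineSpan_pair (b / (b + c)) B C using 1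
    rw [AffineMap.lineMap_apply, hB, hC, vadd_vsub_vadd_cancel_right, vadd_vadd]
    congr 1
    match_scalars
    · field_simp
      ring
    · field_simp
  have hvw₀ : v + w ≠ 0 := by
    intro h
    rw [← add_eq_zero_iff_neg_eq.1 h, inner_neg_right, real_inner_self_eq_norm_sq, hv] at hvw
    norm_num at hvw
  have hAD₀ : line[ℝ, B, C].SOppSide A ((b + c) • (v + w) +ᵥ M) := by
    have hlt : b * c / (b + c) < b + c := by
      rw [div_lt_iff₀ (by positivity)]
      nlinarith
    have h := sbtw_smul_vadd_smul_vadd_smul_vadd hvw₀ M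
      (neg_neg_of_pos ha |>.trans (by positivity)) hlt
    rw [← hA] at h
    exact h.sOppSide_of_notMem_of_mem hD.right_notMem hX
  exact eq_of_dist_eq_of_dist_eq_of_sSameSide hd hBC (by rw [dist_comm, hBD, ← hBD₀, dist_comm])
    (by rw [dist_comm, hCD, ← hCD₀, dist_comm]) (hD.trans hAD₀)

theorem mem_affineSpan_of_angle_eq_two_pi_div_three (hd : finrank ℝ V = 2) {M A B C D : P}
    (hAMB : ∠ A M B = 2 * π / 3) (hBMC : ∠ B M C = 2 * π / 3) (hCMA : ∠ C M A = 2 * π / 3)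
    (hBD : dist B D = dist B C) (hCD : dist C D = dist B C) (hD : line[ℝ, B, C].SOppSide D A) :
    M ∈ line[ℝ, A, D] := by
  have hne : ∀ {X Y : P}, ∠ X M Y = 2 * π / 3 → X -ᵥ M ≠ 0 := by
    rintro X Y h hX
    rw [vsub_eq_zero_iff_eq] at hX
    subst hX
    rw [angle_self_left] at h
    linarith [pi_pos]
  have hrepr : ∀ {X Y : P}, ∠ X M Y = 2 * π / 3 →
      X = ‖X -ᵥ M‖ • (‖X -ᵥ M‖⁻¹ • (X -ᵥ M)) +ᵥ M := fun h => by
    rw [smul_inv_smul₀ (norm_ne_zero_iff.2 (hne h)), vsub_vadd]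
  set u := ‖A -ᵥ M‖⁻¹ • (A -ᵥ M)
  set v := ‖B -ᵥ M‖⁻¹ • (B -ᵥ M)
  set w := ‖C -ᵥ M‖⁻¹ • (C -ᵥ M)
  have huvw : u + v + w = 0 := add_add_eq_zero_of_real_inner_eq_neg_half
    (norm_smul_inv_norm (hne hAMB)) (norm_smul_inv_norm (hne hBMC)) (norm_smul_inv_norm (hne hCMA))
    (real_inner_inv_norm_smul_eq_neg_half hAMB) (real_inner_inv_norm_smul_eq_neg_half hBMC)
    (real_inner_inv_norm_smul_eq_neg_half hCMA)
  have hA : A = (-‖A -ᵥ M‖) • (v + w) +ᵥ M := by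
    rw [show v + w = -u by linear_combination (norm := module) huvw, neg_smul_neg]
    exact hrepr hAMB
  have ha := norm_pos_iff.2 (hne hAMB)
  have hD₀ := eq_smul_vadd_of_dist_eq_of_sOppSide hd (norm_smul_inv_norm (hne hBMC))
    (norm_smul_inv_norm (hne hCMA)) (real_inner_inv_norm_smul_eq_neg_half hBMC) ha
    (norm_pos_iff.2 (hne hBMC)) (norm_pos_iff.2 (hne hCMA)) hA (hrepr hBMC) (hrepr hCMA) hBD hCD hD
  rw [hD₀, hA]
  exact (wbtw_smul_vadd_smul_vadd_of_nonpos_of_nonneg M (v + w) (neg_nonpos.2 ha.le)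
    (by positivity)).mem_affineSpan

end

theorem fermat_point_concurrency_general (A B C M R P Q : EuclideanSpace ℝ (Fin 2))
    -- M is the Fermat point
    (hM1 : ∠ A M B = 2 * Real.pi / 3) (hM2 : ∠ B M C = 2 * Real.pi / 3)
    (hM3 : ∠ C M A = 2 * Real.pi / 3)
    -- equilateral triangle ARB erected externally on side AB
    (hR1 : dist A R = dist A B) (hR2 : dist B R = dist A B)
    (hRside : (affineSpan ℝ ({A, B} : Set (EuclideanSpace ℝ (Fin 2)))).SOppSide R C)
    -- equilateral triangle BPC erected externally on side BC
    (hP1 : dist B P = dist B C) (hP2 : dist C P = dist B C)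
    (hPside : (affineSpan ℝ ({B, C} : Set (EuclideanSpace ℝ (Fin 2)))).SOppSide P A)
    -- equilateral triangle ACQ erected externally on side CA
    (hQ1 : dist A Q = dist C A) (hQ2 : dist C Q = dist C A)
    (hQside : (affineSpan ℝ ({C, A} : Set (EuclideanSpace ℝ (Fin 2)))).SOppSide Q B) :
    M ∈ affineSpan ℝ ({A, P} : Set (EuclideanSpace ℝ (Fin 2))) ∧
    M ∈ affineSpan ℝ ({B, Q} : Set (EuclideanSpace ℝ (Fin 2))) ∧
    M ∈ affineSpan ℝ ({C, R} : Set (EuclideanSpace ℝ (Fin 2))) :=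
  have hd : finrank ℝ (EuclideanSpace ℝ (Fin 2)) = 2 := finrank_euclideanSpace_fin
  ⟨mem_affineSpan_of_angle_eq_two_pi_div_three hd hM1 hM2 hM3 hP1 hP2 hPside,
    mem_affineSpan_of_angle_eq_two_pi_div_three hd hM2 hM3 hM1 hQ2 hQ1 hQside,
    mem_affineSpan_of_angle_eq_two_pi_div_three hd hM3 hM1 hM2 hR1 hR2 hRside⟩

theorem fermat_point_concurrency (A B C M R P Q : EuclideanSpace ℝ (Fin 2))
    (hABC : AffineIndependent ℝ ![A, B, C])
    (hA : ∠ B A C < 2 * Real.pi / 3)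
    (hB : ∠ A B C < 2 * Real.pi / 3)
    (hC : ∠ B C A < 2 * Real.pi / 3)
    -- M is the Fermat point
    (hMint : M ∈ interior (convexHull ℝ {A, B, C}))
    (hM1 : ∠ A M B = 2 * Real.pi / 3) (hM2 : ∠ B M C = 2 * Real.pi / 3)
    (hM3 : ∠ C M A = 2 * Real.pi / 3)
    -- equilateral triangle ARB erected externally on side AB
    (hR1 : dist A R = dist A B) (hR2 : dist B R = dist A B)
    (hRside : (affineSpan ℝ ({A, B} : Set (EuclideanSpace ℝ (Fin 2)))).SOppSide R C)
    -- equilateral triangle BPC erected externally on side BC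
    (hP1 : dist B P = dist B C) (hP2 : dist C P = dist B C)
    (hPside : (affineSpan ℝ ({B, C} : Set (EuclideanSpace ℝ (Fin 2)))).SOppSide P A)
    -- equilateral triangle ACQ erected externally on side CA
    (hQ1 : dist A Q = dist C A) (hQ2 : dist C Q = dist C A)
    (hQside : (affineSpan ℝ ({C, A} : Set (EuclideanSpace ℝ (Fin 2)))).SOppSide Q B) :
    M ∈ affineSpan ℝ ({A, P} : Set (EuclideanSpace ℝ (Fin 2))) ∧
    M ∈ affineSpan ℝ ({B, Q} : Set (EuclideanSpace ℝ (Fin 2))) ∧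
    M ∈ affineSpan ℝ ({C, R} : Set (EuclideanSpace ℝ (Fin 2))) :=
  fermat_point_concurrency_general A B C M R P Q hM1 hM2 hM3 hR1 hR2 hRside hP1 hP2 hPside hQ1 hQ2
    hQside
end

section
/- Let ABC be a triangle with side lengths a = |BC|, b = |CA|, c = |AB|, all angles less than 120°, and Fermat point M. With Θ² = √((a+b+c)(a+c−b)(b+c−a)(a+b−c)), the distance a' = |MA| satisfies (a')² = (1/6)·(√3(b² + c² − a²) + Θ²)² / (a² + b² + c² + √3·Θ²). -/
open EuclideanGeometry

theorem fermat_point_distance_formula (A B C M : EuclideanSpace ℝ (Fin 2))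
    (a b c Θ2 : ℝ)
    (hABC : AffineIndependent ℝ ![A, B, C])
    (hA : ∠ B A C < 2 * Real.pi / 3)
    (hB : ∠ A B C < 2 * Real.pi / 3)
    (hC : ∠ B C A < 2 * Real.pi / 3)
    (hMint : M ∈ interior (convexHull ℝ {A, B, C}))
    (hM1 : ∠ A M B = 2 * Real.pi / 3) (hM2 : ∠ B M C = 2 * Real.pi / 3)
    (hM3 : ∠ C M A = 2 * Real.pi / 3)
    (ha : a = dist B C) (hb : b = dist C A) (hc : c = dist A B)
    (hΘ : Θ2 = Real.sqrt ((a + b + c) * (a + c - b) * (b + c - a) * (a + b - c))) :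
    (dist M A) ^ 2 =
      (1 / 6) * (Real.sqrt 3 * (b ^ 2 + c ^ 2 - a ^ 2) + Θ2) ^ 2 /
        (a ^ 2 + b ^ 2 + c ^ 2 + Real.sqrt 3 * Θ2) := by
  set x := dist M A with hx
  set y := dist M B with hy
  set z := dist M C with hz
  have hcos : Real.cos (2 * Real.pi / 3) = -(1/2) := by
    rw [show (2*Real.pi/3) = Real.pi - Real.pi/3 by ring, Real.cos_pi_sub,
      Real.cos_pi_div_three]
  have hc2 : c ^ 2 = x ^ 2 + y ^ 2 + x * y := by
    have := EuclideanGeometry.law_cos A M B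
    rw [hM1, hcos, dist_comm A M, dist_comm B M] at this
    rw [hc]; linear_combination this
  have ha2 : a ^ 2 = y ^ 2 + z ^ 2 + y * z := by
    have := EuclideanGeometry.law_cos B M C
    rw [hM2, hcos, dist_comm B M, dist_comm C M] at this
    rw [ha]; linear_combination this
  have hb2 : b ^ 2 = z ^ 2 + x ^ 2 + z * x := by
    have := EuclideanGeometry.law_cos C M A
    rw [hM3, hcos, dist_comm C M, dist_comm A M] at this
    rw [hb]; linear_combination this
  have hx0 : 0 < x := by
    rcases lt_or_eq_of_le (dist_nonneg : (0:ℝ) ≤ x) with h | h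
    · exact h
    · exfalso
      have hMA : M = A := dist_eq_zero.mp h.symm
      rw [hMA, EuclideanGeometry.angle_self_left] at hM1
      have := Real.pi_pos
      nlinarith [hM1]
  have hy0 : 0 ≤ y := dist_nonneg
  have hz0 : 0 ≤ z := dist_nonneg
  have hs0 : 0 ≤ x*y + y*z + z*x := by positivity
  have hprod : (a + b + c) * (a + c - b) * (b + c - a) * (a + b - c)
      = 3 * (x*y + y*z + z*x) ^ 2 := by
    linear_combination (2*b^2 + 2*(x^2+y^2+x*y) - a^2 - (y^2+z^2+y*z)) * ha2
      + (2*c^2 + 2*(y^2+z^2+y*z) - b^2 - (z^2+x^2+z*x)) * hb2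
      + (2*a^2 + 2*(z^2+x^2+z*x) - c^2 - (x^2+y^2+x*y)) * hc2
  have hΘ' : Θ2 = Real.sqrt 3 * (x*y + y*z + z*x) := by
    rw [hΘ, hprod, Real.sqrt_mul (by norm_num : (0:ℝ) ≤ 3), Real.sqrt_sq hs0]
  have h3 : Real.sqrt 3 ^ 2 = 3 := Real.sq_sqrt (by norm_num)
  have hden : a ^ 2 + b ^ 2 + c ^ 2 + Real.sqrt 3 * Θ2 = 2 * (x + y + z) ^ 2 := by
    rw [hΘ', ha2, hb2, hc2]
    linear_combination (x*y + y*z + z*x) * h3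
  have hden0 : (2:ℝ) * (x + y + z) ^ 2 ≠ 0 := by positivity
  rw [hden, hΘ', ha2, hb2, hc2, eq_div_iff hden0]
  linear_combination (-(2/3)*x^2*(x+y+z)^2) * h3
end

section
/- Let ABC be a triangle with all angles less than 120° and Fermat point M. Then |MA| + |MB| + |MC| = √((a² + b² + c²)/2 + (√3/2)·Θ²), where a, b, c are the side lengths and Θ² = √((a+b+c)(a+c−b)(b+c−a)(a+b−c)). -/
open EuclideanGeometry

theorem fermat_point_sum_of_distances (A B C M : EuclideanSpace ℝ (Fin 2))
    (a b c Θ2 : ℝ)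
    (hABC : AffineIndependent ℝ ![A, B, C])
    (hA : ∠ B A C < 2 * Real.pi / 3)
    (hB : ∠ A B C < 2 * Real.pi / 3)
    (hC : ∠ B C A < 2 * Real.pi / 3)
    (hMint : M ∈ interior (convexHull ℝ {A, B, C}))
    (hM1 : ∠ A M B = 2 * Real.pi / 3) (hM2 : ∠ B M C = 2 * Real.pi / 3)
    (hM3 : ∠ C M A = 2 * Real.pi / 3)
    (ha : a = dist B C) (hb : b = dist C A) (hc : c = dist A B)
    (hΘ : Θ2 = Real.sqrt ((a + b + c) * (a + c - b) * (b + c - a) * (a + b - c))) :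
    dist M A + dist M B + dist M C =
      Real.sqrt ((a ^ 2 + b ^ 2 + c ^ 2) / 2 + Real.sqrt 3 / 2 * Θ2) := by
  have hcos : Real.cos (2 * Real.pi / 3) = -(1/2) := by
    have h : (2 * Real.pi / 3) = Real.pi - Real.pi / 3 := by ring
    rw [h, Real.cos_pi_sub, Real.cos_pi_div_three]
  set x := dist M A with hx
  set y := dist M B with hy
  set z := dist M C with hz
  have hx0 : 0 ≤ x := dist_nonneg
  have hy0 : 0 ≤ y := dist_nonneg
  have hz0 : 0 ≤ z := dist_nonneg
  have h1 : c ^ 2 = x ^ 2 + y ^ 2 + x * y := by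
    have h := EuclideanGeometry.law_cos A M B
    rw [hM1, hcos, dist_comm A M, dist_comm B M] at h
    rw [hc]
    linear_combination h
  have h2 : a ^ 2 = y ^ 2 + z ^ 2 + y * z := by
    have h := EuclideanGeometry.law_cos B M C
    rw [hM2, hcos, dist_comm B M, dist_comm C M] at h
    rw [ha]
    linear_combination h
  have h3 : b ^ 2 = z ^ 2 + x ^ 2 + z * x := by
    have h := EuclideanGeometry.law_cos C M A
    rw [hM3, hcos, dist_comm C M, dist_comm A M] at h
    rw [hb]
    linear_combination h
  set S := x * y + y * z + z * x with hS
  have hS0 : 0 ≤ S := by positivity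
  have hprod : (a + b + c) * (a + c - b) * (b + c - a) * (a + b - c) = 3 * S ^ 2 := by
    have key : (a + b + c) * (a + c - b) * (b + c - a) * (a + b - c)
        = 2 * (a ^ 2 * b ^ 2 + b ^ 2 * c ^ 2 + c ^ 2 * a ^ 2)
          - (a ^ 2 * a ^ 2 + b ^ 2 * b ^ 2 + c ^ 2 * c ^ 2) := by ring
    rw [key, h1, h2, h3, hS]; ring
  have hΘ' : Θ2 = Real.sqrt 3 * S := by
    rw [hΘ, hprod]
    rw [show (3 : ℝ) * S ^ 2 = 3 * S ^ 2 from rfl, Real.sqrt_mul (by norm_num),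
      Real.sqrt_sq hS0]
  have hinside : (a ^ 2 + b ^ 2 + c ^ 2) / 2 + Real.sqrt 3 / 2 * Θ2 = (x + y + z) ^ 2 := by
    rw [hΘ', h1, h2, h3, hS]
    have h3' : Real.sqrt 3 * Real.sqrt 3 = 3 := Real.mul_self_sqrt (by norm_num)
    linear_combination (x * y + y * z + z * x) / 2 * h3'
  rw [hinside, Real.sqrt_sq (by positivity)]
end

section
/- Let C be the origin and a, b the position vectors of B and A, spanning a triangle with angle φ at C. Erect equilateral triangles outwardly on the sides CB and CA, with apexes P = a/2 − (√3/2)a⊥ and Q = b/2 + (√3/2)b⊥. Then the lines through A and P, and through B and Q, intersect, and the intersection parameters are τ₀ = (√3 b² + 2ab sin(φ − 60°)) / (√3(a² + b²) − 2√3 ab cos(φ + 60°)) and σ₀ = (√3 a² + 2ab sin(φ − 60°)) / (√3(a² + b²) − 2√3 ab cos(φ + 60°)), where a = ‖a‖, b = ‖b‖, and lines are parametrized as ℓ_AP(τ) = b + τ(P − b) and ℓ_BQ(σ) = a + σ(Q − a). -/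
/-!
Write `c = ⟪a, b⟫ = a b cos φ` and `s = ⟪a⊥, b⟫ = a b sin φ`. The addition formulas turn
`2ab sin(φ - 60°)` into `s - √3 c` and `2√3 ab cos(φ + 60°)` into `√3 c - 3s`, so `τ₀` and `σ₀`
become rational functions of the coordinates of `a`, `b` and of `√3`. After multiplying by the
common denominator the claim is a polynomial identity in the coordinates, which holds modulo
`(√3)² = 3`.
-/

/-- Counterclockwise rotation by 90° in the Euclidean plane. -/
noncomputable def perp (v : EuclideanSpace ℝ (Fin 2)) : EuclideanSpace ℝ (Fin 2) :=
  (WithLp.equiv 2 (Fin 2 → ℝ)).symm ![-(v 1), v 0]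

open Real RealInnerProductSpace

@[simp] lemma perp_apply_zero (v : EuclideanSpace ℝ (Fin 2)) : perp v 0 = -v 1 := rfl

@[simp] lemma perp_apply_one (v : EuclideanSpace ℝ (Fin 2)) : perp v 1 = v 0 := rfl

lemma real_inner_eq_fin_two (a b : EuclideanSpace ℝ (Fin 2)) :
    ⟪a, b⟫ = a 0 * b 0 + a 1 * b 1 := by
  simp [PiLp.inner_apply, Fin.sum_univ_two, mul_comm]

lemma norm_sq_eq_fin_two (a : EuclideanSpace ℝ (Fin 2)) : ‖a‖ ^ 2 = a 0 ^ 2 + a 1 ^ 2 := by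
  rw [← real_inner_self_eq_norm_sq, real_inner_eq_fin_two]; ring

lemma two_mul_mul_sin_sub_pi_div_three (x y φ : ℝ) :
    2 * x * y * sin (φ - π / 3) = x * y * sin φ - √3 * (x * y * cos φ) := by
  rw [sin_sub, cos_pi_div_three, sin_pi_div_three]; ring

lemma two_mul_sqrt_three_mul_mul_cos_add_pi_div_three (x y φ : ℝ) :
    2 * √3 * x * y * cos (φ + π / 3) = √3 * (x * y * cos φ) - 3 * (x * y * sin φ) := by
  rw [cos_add, cos_pi_div_three, sin_pi_div_three]
  linear_combination (-(x * y * sin φ)) * Real.sq_sqrt (show (0 : ℝ) ≤ 3 by norm_num)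

lemma smul_add_smul_eq_of_div {V : Type*} [AddCommGroup V] [Module ℝ V] {d m n : ℝ} (hd : d ≠ 0)
    {x y u w : V} (h : d • x + m • u = d • y + n • w) :
    x + (m / d) • u = y + (n / d) • w := by
  apply smul_right_injective V hd
  simpa only [smul_add, smul_smul, mul_div_cancel₀ _ hd] using h

theorem lines_AP_BQ_intersection_mul_denom (a b : EuclideanSpace ℝ (Fin 2)) :
    let d := √3 * (‖a‖ ^ 2 + ‖b‖ ^ 2) - (√3 * ⟪a, b⟫ - 3 * ⟪perp a, b⟫)
    d • b + (√3 * ‖b‖ ^ 2 + (⟪perp a, b⟫ - √3 * ⟪a, b⟫)) •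
        ((1 / 2 : ℝ) • a - (√3 / 2) • perp a - b) =
      d • a + (√3 * ‖a‖ ^ 2 + (⟪perp a, b⟫ - √3 * ⟪a, b⟫)) •
        ((1 / 2 : ℝ) • b + (√3 / 2) • perp b - a) := by
  have h3 : √3 ^ 2 = 3 := Real.sq_sqrt (by norm_num)
  simp only [norm_sq_eq_fin_two, real_inner_eq_fin_two]
  ext i
  fin_cases i <;>
    simp only [Fin.zero_eta, Fin.mk_one, Fin.isValue, PiLp.add_apply, PiLp.sub_apply,
      PiLp.smul_apply, smul_eq_mul, perp_apply_zero, perp_apply_one]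
  · linear_combination
      ((b 0 ^ 2 + b 1 ^ 2 - (a 0 * b 0 + a 1 * b 1)) * a 1
        + (a 0 ^ 2 + a 1 ^ 2 - (a 0 * b 0 + a 1 * b 1)) * b 1) / 2 * h3
  · linear_combination
      -((b 0 ^ 2 + b 1 ^ 2 - (a 0 * b 0 + a 1 * b 1)) * a 0
        + (a 0 ^ 2 + a 1 ^ 2 - (a 0 * b 0 + a 1 * b 1)) * b 0) / 2 * h3

theorem lines_AP_BQ_intersection_general (a b : EuclideanSpace ℝ (Fin 2)) (φ : ℝ)
    (hcos : (inner ℝ a b : ℝ) = ‖a‖ * ‖b‖ * Real.cos φ)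
    (hsin : (inner ℝ (perp a) b : ℝ) = ‖a‖ * ‖b‖ * Real.sin φ)
    (hden : Real.sqrt 3 * (‖a‖ ^ 2 + ‖b‖ ^ 2) -
        2 * Real.sqrt 3 * ‖a‖ * ‖b‖ * Real.cos (φ + Real.pi / 3) ≠ 0) :
    let P := (1 / 2 : ℝ) • a - (Real.sqrt 3 / 2) • perp a
    let Q := (1 / 2 : ℝ) • b + (Real.sqrt 3 / 2) • perp b
    let τ₀ := (Real.sqrt 3 * ‖b‖ ^ 2 + 2 * ‖a‖ * ‖b‖ * Real.sin (φ - Real.pi / 3)) /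
      (Real.sqrt 3 * (‖a‖ ^ 2 + ‖b‖ ^ 2) -
        2 * Real.sqrt 3 * ‖a‖ * ‖b‖ * Real.cos (φ + Real.pi / 3))
    let σ₀ := (Real.sqrt 3 * ‖a‖ ^ 2 + 2 * ‖a‖ * ‖b‖ * Real.sin (φ - Real.pi / 3)) /
      (Real.sqrt 3 * (‖a‖ ^ 2 + ‖b‖ ^ 2) -
        2 * Real.sqrt 3 * ‖a‖ * ‖b‖ * Real.cos (φ + Real.pi / 3))
    b + τ₀ • (P - b) = a + σ₀ • (Q - a) := by
  rw [two_mul_sqrt_three_mul_mul_cos_add_pi_div_three, ← hcos, ← hsin] at hden ⊢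
  rw [two_mul_mul_sin_sub_pi_div_three, ← hcos, ← hsin]
  exact smul_add_smul_eq_of_div hden (lines_AP_BQ_intersection_mul_denom a b)

theorem lines_AP_BQ_intersection (a b : EuclideanSpace ℝ (Fin 2)) (φ : ℝ)
    (hab : LinearIndependent ℝ ![a, b])
    (hφ0 : 0 < φ) (hφπ : φ < Real.pi)
    (hcos : (inner ℝ a b : ℝ) = ‖a‖ * ‖b‖ * Real.cos φ)
    (hsin : (inner ℝ (perp a) b : ℝ) = ‖a‖ * ‖b‖ * Real.sin φ)
    (hden : Real.sqrt 3 * (‖a‖ ^ 2 + ‖b‖ ^ 2) -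
        2 * Real.sqrt 3 * ‖a‖ * ‖b‖ * Real.cos (φ + Real.pi / 3) ≠ 0) :
    let P := (1 / 2 : ℝ) • a - (Real.sqrt 3 / 2) • perp a
    let Q := (1 / 2 : ℝ) • b + (Real.sqrt 3 / 2) • perp b
    let τ₀ := (Real.sqrt 3 * ‖b‖ ^ 2 + 2 * ‖a‖ * ‖b‖ * Real.sin (φ - Real.pi / 3)) /
      (Real.sqrt 3 * (‖a‖ ^ 2 + ‖b‖ ^ 2) -
        2 * Real.sqrt 3 * ‖a‖ * ‖b‖ * Real.cos (φ + Real.pi / 3))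
    let σ₀ := (Real.sqrt 3 * ‖a‖ ^ 2 + 2 * ‖a‖ * ‖b‖ * Real.sin (φ - Real.pi / 3)) /
      (Real.sqrt 3 * (‖a‖ ^ 2 + ‖b‖ ^ 2) -
        2 * Real.sqrt 3 * ‖a‖ * ‖b‖ * Real.cos (φ + Real.pi / 3))
    b + τ₀ • (P - b) = a + σ₀ • (Q - a) :=
  lines_AP_BQ_intersection_general a b φ hcos hsin hden
end

section
/- Let triangle ABC have side lengths a = |BC|, b = |CA|, c = |AB| and let X be an interior point with ∠BXC = ψ_a, ∠CXA = ψ_b, ∠AXB = ψ_c = 2π − ψ_a − ψ_b. Then, with Θ² = √((a+b+c)(a+c−b)(b+c−a)(a+b−c)), the distance c' = |CX| satisfies (c')² = [ (1/4)((1 − cot ψ_a cot ψ_b)Θ² − (cot ψ_a + cot ψ_b)(a² + b² − c²))² ] / [ c² + a² cot²ψ_a + b² cot²ψ_b + cot ψ_a cot ψ_b (a² + b² − c²) − (cot ψ_a + cot ψ_b)Θ² ]. -/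
/-!
Put `u, v, w = A - X, B - X, C - X` and let `λ, μ, ν ≥ 0` be barycentric weights of `X`.
For an area form `ω` of the plane and `D = ω (B - A) (C - A)` one has `ω v w = λ D`,
`ω w u = μ D`, and Heron's formula reads `Θ² = 2 |D|`. Since `λ, μ ≥ 0`, this gives
`cot ψ_a = ⟪v, w⟫ / (λ |D|)` and `cot ψ_b = ⟪w, u⟫ / (μ |D|)`, so the claim becomes an identity
between the Gram data of `u, v, w`; it follows from `⟪x, y⟫² + ω x y² = ‖x‖² ‖y‖²`,
its polarisation, and `λ u + μ v + ν w = 0`.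
-/

open Module InnerProductGeometry RealInnerProductSpace EuclideanGeometry
open scoped EuclideanSpace

theorem mul_denominator_eq_of_gram_relations {x y z P Q R l m n t a b c Θ p q : ℝ}
    (hl : l ≠ 0) (hm : m ≠ 0) (ht : t ≠ 0) (hlmn : l + m + n = 1)
    (hyz : y * z = P ^ 2 + (l * t) ^ 2) (hzx : z * x = Q ^ 2 + (m * t) ^ 2)
    (hzR : z * R = P * Q - l * m * t ^ 2) (hbary : l * Q + m * P + n * z = 0)
    (ha : a ^ 2 = y + z - 2 * P) (hb : b ^ 2 = z + x - 2 * Q) (hc : c ^ 2 = x + y - 2 * R)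
    (hΘ : Θ = 2 * t) (hp : p = P / (l * t)) (hq : q = Q / (m * t)) :
    z * (c ^ 2 + a ^ 2 * p ^ 2 + b ^ 2 * q ^ 2 + p * q * (a ^ 2 + b ^ 2 - c ^ 2) - (p + q) * Θ) =
      1 / 4 * ((1 - p * q) * Θ - (p + q) * (a ^ 2 + b ^ 2 - c ^ 2)) ^ 2 := by
  have hz : z ≠ 0 := by
    rintro rfl
    exact mul_ne_zero hl ht (by nlinarith [sq_nonneg P, sq_nonneg (l * t)])
  have hy : y = (P ^ 2 + (l * t) ^ 2) / z := by field_simp; linear_combination hyz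
  have hx : x = (Q ^ 2 + (m * t) ^ 2) / z := by field_simp; linear_combination hzx
  have hR : R = (P * Q - l * m * t ^ 2) / z := by field_simp; linear_combination hzR
  have hQ : Q = -(m * P + (1 - l - m) * z) / l := by
    field_simp; linear_combination hbary - z * hlmn
  rw [ha, hb, hc, hΘ, hp, hq, hx, hy, hR, hQ]
  field_simp
  ring

theorem exists_weights_of_mem_convexHull_triple {E : Type*} [AddCommGroup E] [Module ℝ E]
    {A B C X : E} (hX : X ∈ convexHull ℝ {A, B, C}) :
    ∃ l m n : ℝ, 0 ≤ l ∧ 0 ≤ m ∧ 0 ≤ n ∧ l + m + n = 1 ∧ X = l • A + m • B + n • C := by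
  rw [convexHull_insert (Set.insert_nonempty _ _), convexHull_pair, mem_convexJoin] at hX
  obtain ⟨_, rfl, Y, ⟨m', n', hm', hn', hmn', rfl⟩, l, s, hl, hs, hls, rfl⟩ := hX
  refine ⟨l, s * m', s * n', hl, by positivity, by positivity, ?_, ?_⟩
  · linear_combination hls + s * hmn'
  · simp only [smul_add, smul_smul, add_assoc]

theorem Real.cot_neg_of_pi_div_two_lt_of_lt {x : ℝ} (h1 : Real.pi / 2 < x) (h2 : x < Real.pi) :
    Real.cot x < 0 := by
  rw [Real.cot_eq_cos_div_sin]
  exact div_neg_of_neg_of_pos (Real.cos_neg_of_pi_div_two_lt_of_lt h1 (by linarith [Real.pi_pos]))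
    (Real.sin_pos_of_pos_of_lt_pi (by linarith [Real.pi_pos]) h2)

section Orientation

variable {V : Type*} [NormedAddCommGroup V] [InnerProductSpace ℝ V] [Fact (finrank ℝ V = 2)]
  (o : Orientation ℝ V (Fin 2))

local notation "ω" => o.areaForm

/-- If `v` or `w` is `0`, both sides are `0`: the angle is `π / 2` and `|ω v w| = 0`. -/
theorem Orientation.cot_angle_eq_inner_div_abs_areaForm (v w : V) :
    Real.cot (angle v w) = ⟪v, w⟫ / |ω v w| := by
  have hsin : Real.sin (angle v w) * (‖v‖ * ‖w‖) = |ω v w| := by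
    rw [sin_angle_mul_norm_mul_norm, ← Real.sqrt_sq_eq_abs, real_inner_self_eq_norm_sq,
      real_inner_self_eq_norm_sq]
    congr 1
    linear_combination -o.inner_sq_add_areaForm_sq v w
  rcases eq_or_ne (‖v‖ * ‖w‖) 0 with h | h
  · rcases mul_eq_zero.1 h with h | h <;> simp [norm_eq_zero.1 h, Real.cot_eq_cos_div_sin]
  · rw [Real.cot_eq_cos_div_sin, ← hsin, ← cos_angle_mul_norm_mul_norm, mul_div_mul_right _ _ h]

theorem Orientation.areaForm_sub_smul_add_smul_add_smul {l m n : ℝ} (hlmn : l + m + n = 1)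
    (A B C : V) :
    ω (B - (l • A + m • B + n • C)) (C - (l • A + m • B + n • C)) = l * ω (B - A) (C - A) := by
  have hB : B - (l • A + m • B + n • C) = (1 - m) • (B - A) - n • (C - A) := by
    linear_combination (norm := module) -hlmn • A
  have hC : C - (l • A + m • B + n • C) = (1 - n) • (C - A) - m • (B - A) := by
    linear_combination (norm := module) -hlmn • A
  rw [hB, hC]
  generalize B - A = e₁, C - A = e₂
  simp only [map_sub, map_smul, LinearMap.sub_apply, LinearMap.smul_apply, o.areaForm_apply_self,
    smul_eq_mul, o.areaForm_swap e₂ e₁]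
  linear_combination (-(ω e₁ e₂)) * hlmn

theorem Orientation.areaForm_sub_sub_rotate (A B C : V) :
    ω (C - B) (A - B) = ω (B - A) (C - A) := by
  rw [show C - B = (C - A) - (B - A) by abel, show A - B = -(B - A) by abel]
  generalize B - A = e₁, C - A = e₂
  simp only [map_sub, map_neg, LinearMap.sub_apply, o.areaForm_apply_self, o.areaForm_swap e₂ e₁]
  ring

theorem Orientation.heron_product_eq (A B C : V) :
    (dist B C + dist C A + dist A B) * (dist B C + dist A B - dist C A) *
      (dist C A + dist A B - dist B C) * (dist B C + dist C A - dist A B) =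
      4 * ω (B - A) (C - A) ^ 2 := by
  have hBC : dist B C ^ 2 = ‖B - A‖ ^ 2 + ‖C - A‖ ^ 2 - 2 * ⟪B - A, C - A⟫ := by
    rw [dist_eq_norm, ← sub_sub_sub_cancel_right B C A, norm_sub_sq_real]; ring
  rw [dist_eq_norm C A, dist_comm A B, dist_eq_norm B A]
  linear_combination (‖B - A‖ ^ 2 + ‖C - A‖ ^ 2 - dist B C ^ 2 + 2 * ⟪B - A, C - A⟫) * hBC -
    4 * o.inner_sq_add_areaForm_sq (B - A) (C - A)

theorem Orientation.sq_norm_mul_denominator_eq {u v w : V} {l m n D a b c Θ p q : ℝ}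
    (hl : l ≠ 0) (hm : m ≠ 0) (hD : D ≠ 0) (hlmn : l + m + n = 1)
    (hvw : ω v w = l * D) (hwu : ω w u = m * D) (hbary : l • u + m • v + n • w = 0)
    (ha : a = ‖v - w‖) (hb : b = ‖w - u‖) (hc : c = ‖u - v‖) (hΘ : Θ = 2 * |D|)
    (hp : p = ⟪v, w⟫ / (l * |D|)) (hq : q = ⟪w, u⟫ / (m * |D|)) :
    ‖w‖ ^ 2 * (c ^ 2 + a ^ 2 * p ^ 2 + b ^ 2 * q ^ 2 + p * q * (a ^ 2 + b ^ 2 - c ^ 2) -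
        (p + q) * Θ) =
      1 / 4 * ((1 - p * q) * Θ - (p + q) * (a ^ 2 + b ^ 2 - c ^ 2)) ^ 2 := by
  have hD2 : |D| ^ 2 = D ^ 2 := sq_abs D
  refine mul_denominator_eq_of_gram_relations (x := ‖u‖ ^ 2) (y := ‖v‖ ^ 2) (R := ⟪u, v⟫)
    hl hm (abs_ne_zero.2 hD) hlmn ?_ ?_ ?_ ?_ ?_ ?_ ?_ hΘ hp hq
  · linear_combination -o.inner_sq_add_areaForm_sq v w + (ω v w + l * D) * hvw - l ^ 2 * hD2
  · linear_combination -o.inner_sq_add_areaForm_sq w u + (ω w u + m * D) * hwu - m ^ 2 * hD2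
  · have h := o.inner_mul_inner_add_areaForm_mul_areaForm w v u
    rw [o.areaForm_swap w v, hvw, hwu, real_inner_comm v w, real_inner_comm u v] at h
    linear_combination -h + l * m * hD2
  · have h := congrArg (fun x ↦ ⟪w, x⟫) hbary
    simp only [inner_add_right, inner_smul_right, inner_zero_right, real_inner_self_eq_norm_sq,
      real_inner_comm v w] at h
    linear_combination h
  · rw [ha, norm_sub_sq_real]; ring
  · rw [hb, norm_sub_sq_real]; ring
  · rw [hc, norm_sub_sq_real]; ring

end Orientation

theorem sq_dist_eq_of_mem_convexHull {V : Type*} [NormedAddCommGroup V] [InnerProductSpace ℝ V]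
    [Fact (finrank ℝ V = 2)] {A B C X : V} {a b c Θ2 ψa ψb : ℝ}
    (hX : X ∈ convexHull ℝ {A, B, C})
    (ha : a = dist B C) (hb : b = dist C A) (hc : c = dist A B)
    (hψa : ∠ B X C = ψa) (hψb : ∠ C X A = ψb)
    (hψa1 : Real.pi / 2 < ψa) (hψa2 : ψa < Real.pi)
    (hψb1 : Real.pi / 2 < ψb) (hψb2 : ψb < Real.pi)
    (hΘ : Θ2 = Real.sqrt ((a + b + c) * (a + c - b) * (b + c - a) * (a + b - c)))
    (hden : c ^ 2 + a ^ 2 * Real.cot ψa ^ 2 + b ^ 2 * Real.cot ψb ^ 2 +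
        Real.cot ψa * Real.cot ψb * (a ^ 2 + b ^ 2 - c ^ 2) -
        (Real.cot ψa + Real.cot ψb) * Θ2 ≠ 0) :
    (dist C X) ^ 2 =
      (1 / 4) * ((1 - Real.cot ψa * Real.cot ψb) * Θ2 -
          (Real.cot ψa + Real.cot ψb) * (a ^ 2 + b ^ 2 - c ^ 2)) ^ 2 /
        (c ^ 2 + a ^ 2 * Real.cot ψa ^ 2 + b ^ 2 * Real.cot ψb ^ 2 +
          Real.cot ψa * Real.cot ψb * (a ^ 2 + b ^ 2 - c ^ 2) -
          (Real.cot ψa + Real.cot ψb) * Θ2) := by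
  have := FiniteDimensional.of_fact_finrank_eq_two (K := ℝ) (V := V)
  let o : Orientation ℝ V (Fin 2) := (finBasisOfFinrankEq ℝ V Fact.out).orientation
  obtain ⟨l, m, n, hl, hm, -, hlmn, hXlmn⟩ := exists_weights_of_mem_convexHull_triple hX
  have hvw : o.areaForm (B - X) (C - X) = l * o.areaForm (B - A) (C - A) :=
    hXlmn ▸ o.areaForm_sub_smul_add_smul_add_smul hlmn A B C
  have hwu : o.areaForm (C - X) (A - X) = m * o.areaForm (B - A) (C - A) := by
    rw [← o.areaForm_sub_sub_rotate A B C, hXlmn]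
    convert o.areaForm_sub_smul_add_smul_add_smul (l := m) (m := n) (n := l)
      (by linear_combination hlmn) B C A using 3 <;> abel
  set D := o.areaForm (B - A) (C - A)
  have hcot_a : Real.cot ψa = ⟪B - X, C - X⟫ / (l * |D|) := by
    rw [← hψa, EuclideanGeometry.angle, vsub_eq_sub, vsub_eq_sub,
      o.cot_angle_eq_inner_div_abs_areaForm, hvw, abs_mul, abs_of_nonneg hl]
  have hcot_b : Real.cot ψb = ⟪C - X, A - X⟫ / (m * |D|) := by
    rw [← hψb, EuclideanGeometry.angle, vsub_eq_sub, vsub_eq_sub,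
      o.cot_angle_eq_inner_div_abs_areaForm, hwu, abs_mul, abs_of_nonneg hm]
  have hlD : l * |D| ≠ 0 := fun h ↦
    (Real.cot_neg_of_pi_div_two_lt_of_lt hψa1 hψa2).ne (by rw [hcot_a, h, div_zero])
  have hmD : m * |D| ≠ 0 := fun h ↦
    (Real.cot_neg_of_pi_div_two_lt_of_lt hψb1 hψb2).ne (by rw [hcot_b, h, div_zero])
  have hΘD : Θ2 = 2 * |D| := by
    rw [hΘ, ha, hb, hc, o.heron_product_eq, show (4 : ℝ) * D ^ 2 = (2 * |D|) ^ 2 by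
      rw [mul_pow, sq_abs]; norm_num, Real.sqrt_sq (by positivity)]
  have hbary : l • (A - X) + m • (B - X) + n • (C - X) = 0 := by
    rw [hXlmn]; linear_combination (norm := module) (-hlmn) • (l • A + m • B + n • C)
  rw [eq_div_iff hden, dist_eq_norm]
  exact o.sq_norm_mul_denominator_eq (left_ne_zero_of_mul hlD) (left_ne_zero_of_mul hmD)
    (abs_ne_zero.1 (right_ne_zero_of_mul hlD)) hlmn hvw hwu hbary
    (by rw [ha, dist_eq_norm, sub_sub_sub_cancel_right])
    (by rw [hb, dist_eq_norm, sub_sub_sub_cancel_right])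
    (by rw [hc, dist_eq_norm, sub_sub_sub_cancel_right]) hΘD hcot_a hcot_b

theorem interior_point_distance_formula_general (A B C X : EuclideanSpace ℝ (Fin 2))
    (a b c Θ2 ψa ψb : ℝ)
    (hX : X ∈ interior (convexHull ℝ {A, B, C}))
    (ha : a = dist B C) (hb : b = dist C A) (hc : c = dist A B)
    (hψa : ∠ B X C = ψa) (hψb : ∠ C X A = ψb)
    (hψa1 : Real.pi / 2 < ψa) (hψa2 : ψa < Real.pi)
    (hψb1 : Real.pi / 2 < ψb) (hψb2 : ψb < Real.pi)
    (hΘ : Θ2 = Real.sqrt ((a + b + c) * (a + c - b) * (b + c - a) * (a + b - c)))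
    (hden : c ^ 2 + a ^ 2 * Real.cot ψa ^ 2 + b ^ 2 * Real.cot ψb ^ 2 +
        Real.cot ψa * Real.cot ψb * (a ^ 2 + b ^ 2 - c ^ 2) -
        (Real.cot ψa + Real.cot ψb) * Θ2 ≠ 0) :
    (dist C X) ^ 2 =
      (1 / 4) * ((1 - Real.cot ψa * Real.cot ψb) * Θ2 -
          (Real.cot ψa + Real.cot ψb) * (a ^ 2 + b ^ 2 - c ^ 2)) ^ 2 /
        (c ^ 2 + a ^ 2 * Real.cot ψa ^ 2 + b ^ 2 * Real.cot ψb ^ 2 +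
          Real.cot ψa * Real.cot ψb * (a ^ 2 + b ^ 2 - c ^ 2) -
          (Real.cot ψa + Real.cot ψb) * Θ2) :=
  sq_dist_eq_of_mem_convexHull (interior_subset hX) ha hb hc hψa hψb hψa1 hψa2 hψb1 hψb2 hΘ hden

theorem interior_point_distance_formula (A B C X : EuclideanSpace ℝ (Fin 2))
    (a b c Θ2 ψa ψb : ℝ)
    (hABC : AffineIndependent ℝ ![A, B, C])
    (hX : X ∈ interior (convexHull ℝ {A, B, C}))
    (ha : a = dist B C) (hb : b = dist C A) (hc : c = dist A B)
    (hψa : ∠ B X C = ψa) (hψb : ∠ C X A = ψb)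
    (hψa1 : Real.pi / 2 < ψa) (hψa2 : ψa < Real.pi)
    (hψb1 : Real.pi / 2 < ψb) (hψb2 : ψb < Real.pi)
    (hΘ : Θ2 = Real.sqrt ((a + b + c) * (a + c - b) * (b + c - a) * (a + b - c)))
    (hden : c ^ 2 + a ^ 2 * Real.cot ψa ^ 2 + b ^ 2 * Real.cot ψb ^ 2 +
        Real.cot ψa * Real.cot ψb * (a ^ 2 + b ^ 2 - c ^ 2) -
        (Real.cot ψa + Real.cot ψb) * Θ2 ≠ 0) :
    (dist C X) ^ 2 =
      (1 / 4) * ((1 - Real.cot ψa * Real.cot ψb) * Θ2 -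
          (Real.cot ψa + Real.cot ψb) * (a ^ 2 + b ^ 2 - c ^ 2)) ^ 2 /
        (c ^ 2 + a ^ 2 * Real.cot ψa ^ 2 + b ^ 2 * Real.cot ψb ^ 2 +
          Real.cot ψa * Real.cot ψb * (a ^ 2 + b ^ 2 - c ^ 2) -
          (Real.cot ψa + Real.cot ψb) * Θ2) :=
  interior_point_distance_formula_general A B C X a b c Θ2 ψa ψb hX ha hb hc hψa hψb hψa1 hψa2 hψb1
    hψb2 hΘ hden
end

section
/- In the unbalanced star-point problem with an isosceles triangle a = b and ψ_a = ψ_b ∈ (π/2, π), the general formula gives c' = (c/2)·((1 − cot²ψ_a)Θ² − 2 cot ψ_a (2a² − c²)) / (c² − Θ² cot ψ_a), where Θ² = c√(4a² − c²); moreover c' = 0 if and only if cot ψ_a = −√(4a² − c²)/c. -/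
/-!
The law of cosines in the triangles `BXC` and `CXA`, together with `cos ψ < 0`, forces
`|AX| = |BX| =: x`. In the plane the oriented angles at `X` add up, so `cos ∠AXB` is `cos 2ψ`
or `cos 0`; the latter would give `A = B`, hence `c = 2x sin ψ`. The law of cosines in `BXC`
is then a quadratic in `c' = |CX|` whose root with `c' - x cos ψ ≥ 0` is
`c' = (c cot ψ + √(4a² - c²)) / 2`, and both claims are algebra from there.
-/

open EuclideanGeometry Real

namespace InnerProductGeometry

variable {V : Type*} [NormedAddCommGroup V] [InnerProductSpace ℝ V]

theorem cos_angle_eq_cos_add_or_cos_sub (hd : Module.finrank ℝ V = 2) {u v w : V}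
    (hu : u ≠ 0) (hv : v ≠ 0) (hw : w ≠ 0) :
    cos (angle u w) = cos (angle u v + angle v w) ∨
      cos (angle u w) = cos (angle u v - angle v w) := by
  have : Fact (Module.finrank ℝ V = 2) := ⟨hd⟩
  have : Module.Finite ℝ V := Module.finite_of_finrank_eq_succ hd
  let o : Orientation ℝ V (Fin 2) := (Module.finBasisOfFinrankEq ℝ V hd).orientation
  rw [← o.cos_oangle_eq_cos_angle hu hw, ← o.oangle_add hu hv hw]
  rcases o.oangle_eq_angle_or_eq_neg_angle hu hv with h₁ | h₁ <;>
    rcases o.oangle_eq_angle_or_eq_neg_angle hv hw with h₂ | h₂ <;>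
    simp [h₁, h₂, ← Real.Angle.coe_neg, ← Real.Angle.coe_add, cos_add, cos_sub]

end InnerProductGeometry

namespace EuclideanGeometry

variable {V P : Type*} [NormedAddCommGroup V] [InnerProductSpace ℝ V] [MetricSpace P]
  [NormedAddTorsor V P]

theorem cos_angle_eq_cos_add_or_cos_sub (hd : Module.finrank ℝ V = 2) {p p₁ p₂ p₃ : P}
    (h₁ : p₁ ≠ p) (h₂ : p₂ ≠ p) (h₃ : p₃ ≠ p) :
    cos (∠ p₁ p p₃) = cos (∠ p₁ p p₂ + ∠ p₂ p p₃) ∨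
      cos (∠ p₁ p p₃) = cos (∠ p₁ p p₂ - ∠ p₂ p p₃) :=
  InnerProductGeometry.cos_angle_eq_cos_add_or_cos_sub hd (vsub_ne_zero.2 h₁)
    (vsub_ne_zero.2 h₂) (vsub_ne_zero.2 h₃)

theorem dist_eq_of_angle_eq_of_dist_eq {p p₁ p₂ p₃ : P} (hdist : dist p₁ p₃ = dist p₂ p₃)
    (hangle : ∠ p₁ p p₃ = ∠ p₂ p p₃) (hobtuse : π / 2 < ∠ p₁ p p₃) :
    dist p₁ p = dist p₂ p := by
  have hcos : cos (∠ p₁ p p₃) < 0 :=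
    cos_neg_of_pi_div_two_lt_of_lt hobtuse (by linarith [angle_le_pi p₁ p p₃, pi_pos])
  have hlaw₁ := law_cos p₁ p p₃
  have hlaw₂ := law_cos p₂ p p₃
  rw [← hdist, ← hangle] at hlaw₂
  have hfactor : (dist p₁ p - dist p₂ p) *
      (dist p₁ p + dist p₂ p - 2 * dist p₃ p * cos (∠ p₁ p p₃)) = 0 := by
    linear_combination hlaw₂ - hlaw₁
  rcases mul_eq_zero.1 hfactor with h | h
  · linarith
  · nlinarith [dist_nonneg (x := p₁) (y := p), dist_nonneg (x := p₂) (y := p),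
      dist_nonneg (x := p₃) (y := p)]

theorem two_mul_dist_mul_sin_angle_eq_dist (hd : Module.finrank ℝ V = 2) {p p₁ p₂ p₃ : P}
    (h₁₂ : p₁ ≠ p₂) (h₃ : p₃ ≠ p) (hdist : dist p₁ p = dist p₂ p)
    (hangle : ∠ p₁ p p₃ = ∠ p₃ p p₂) :
    2 * dist p₁ p * sin (∠ p₁ p p₃) = dist p₁ p₂ := by
  have h₁ : p₁ ≠ p := by
    rintro rfl
    exact h₁₂ (dist_eq_zero.1 (by rw [dist_comm, ← hdist, dist_self]))
  have h₂ : p₂ ≠ p := by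
    rintro rfl
    exact h₁₂ (dist_eq_zero.1 (by rw [hdist, dist_self]))
  have hlaw := law_cos p₁ p p₂
  rw [← hdist] at hlaw
  rcases cos_angle_eq_cos_add_or_cos_sub hd h₁ h₃ h₂ with h | h <;>
    rw [h, ← hangle] at hlaw
  · refine (sq_eq_sq₀ (mul_nonneg (by positivity)
      (sin_nonneg_of_nonneg_of_le_pi (angle_nonneg _ _ _) (angle_le_pi _ _ _)))
      dist_nonneg).1 ?_
    rw [cos_add] at hlaw
    linear_combination -hlaw + 2 * dist p₁ p ^ 2 * sin_sq_add_cos_sq (∠ p₁ p p₃)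
  · rw [sub_self, cos_zero] at hlaw
    exact absurd (dist_eq_zero.1 (by nlinarith)) h₁₂

end EuclideanGeometry

theorem two_mul_eq_mul_cot_add_sqrt_of_law_cos {a c x z ψ : ℝ} (hz : 0 ≤ z) (hx : 0 ≤ x)
    (hsin : 0 < sin ψ) (hcos : cos ψ < 0) (hchord : 2 * x * sin ψ = c)
    (hlaw : a ^ 2 = z ^ 2 + x ^ 2 - 2 * z * x * cos ψ) :
    2 * z = c * cot ψ + √(4 * a ^ 2 - c ^ 2) := by
  have hxcos : 2 * x * cos ψ = c * cot ψ := by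
    rw [cot_eq_cos_div_sin, ← hchord]
    field_simp
  have hsq : 4 * a ^ 2 - c ^ 2 = (2 * z - 2 * x * cos ψ) ^ 2 := by
    linear_combination 4 * hlaw + (2 * x * sin ψ + c) * hchord -
      4 * x ^ 2 * sin_sq_add_cos_sq ψ
  rw [hsq, sqrt_sq (by nlinarith), ← hxcos]
  ring

theorem isosceles_dist_formula_of_two_mul_eq {a c z K s : ℝ} (hc : 0 < c) (hK : K < 0)
    (hs : 0 ≤ s) (hs2 : s ^ 2 = 4 * a ^ 2 - c ^ 2) (hz : 2 * z = c * K + s) :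
    z = (c / 2) * ((1 - K ^ 2) * (c * s) - 2 * K * (2 * a ^ 2 - c ^ 2)) / (c ^ 2 - c * s * K) ∧
      (z = 0 ↔ K = -s / c) := by
  have hden : c ^ 2 - c * s * K ≠ 0 :=
    ne_of_gt (by nlinarith [mul_nonneg (mul_nonneg hc.le hs) (neg_nonneg.2 hK.le)])
  constructor
  · rw [eq_div_iff hden]
    linear_combination (c ^ 2 - c * s * K) / 2 * hz - c * K / 2 * hs2
  · rw [eq_div_iff hc.ne']
    constructor <;> intro h <;> linarith

theorem isosceles_interior_point_general (A B C X : EuclideanSpace ℝ (Fin 2))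
    (a c ψ Θ2 : ℝ)
    (hc0 : 0 < c)
    (hBC : dist B C = a) (hCA : dist C A = a) (hAB : dist A B = c)
    (hψa : ∠ B X C = ψ) (hψb : ∠ C X A = ψ)
    (hψ1 : Real.pi / 2 < ψ)
    (hΘ : Θ2 = c * Real.sqrt (4 * a ^ 2 - c ^ 2)) :
    dist C X = (c / 2) * ((1 - Real.cot ψ ^ 2) * Θ2 -
        2 * Real.cot ψ * (2 * a ^ 2 - c ^ 2)) / (c ^ 2 - Θ2 * Real.cot ψ) ∧
    (dist C X = 0 ↔ Real.cot ψ = -Real.sqrt (4 * a ^ 2 - c ^ 2) / c) := by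
  have hd : Module.finrank ℝ (EuclideanSpace ℝ (Fin 2)) = 2 := finrank_euclideanSpace_fin
  have hBX : B ≠ X := by rintro rfl; simp at hψa; linarith
  have hCX : C ≠ X := by rintro rfl; simp at hψa; linarith
  have hBA : B ≠ A := by rintro rfl; simp at hAB; linarith
  have hxy : dist B X = dist A X := dist_eq_of_angle_eq_of_dist_eq
    (by rw [hBC, dist_comm, hCA]) (by rw [hψa, angle_comm, hψb]) (hψa ▸ hψ1)
  have hchord : 2 * dist B X * sin ψ = c := by
    rw [← hψa, ← hAB, dist_comm A]
    exact two_mul_dist_mul_sin_angle_eq_dist hd hBA hCX hxy (hψa.trans hψb.symm)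
  have hsin : 0 < sin ψ := pos_of_mul_pos_right (hchord ▸ hc0) (by positivity)
  have hcos : cos ψ < 0 :=
    cos_neg_of_pi_div_two_lt_of_lt hψ1 (by linarith [hψa ▸ angle_le_pi B X C, pi_pos])
  have hlaw : a ^ 2 = dist C X ^ 2 + dist B X ^ 2 - 2 * dist C X * dist B X * cos ψ := by
    rw [← hBC, ← hψa, angle_comm, dist_comm B]
    linear_combination law_cos C X B
  have hz := two_mul_eq_mul_cot_add_sqrt_of_law_cos dist_nonneg dist_nonneg hsin hcos hchord hlaw
  have hca : c ≤ 2 * a := by linarith [dist_triangle A C B, dist_comm A C, dist_comm C B]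
  subst hΘ
  exact isosceles_dist_formula_of_two_mul_eq hc0
    (cot_eq_cos_div_sin ψ ▸ div_neg_of_neg_of_pos hcos hsin) (sqrt_nonneg _)
    (sq_sqrt (by nlinarith)) hz

theorem isosceles_interior_point (A B C X : EuclideanSpace ℝ (Fin 2))
    (a c ψ Θ2 : ℝ)
    (hABC : AffineIndependent ℝ ![A, B, C])
    (hX : X ∈ interior (convexHull ℝ {A, B, C}))
    (hc0 : 0 < c) (hac : c / 2 < a)
    (hBC : dist B C = a) (hCA : dist C A = a) (hAB : dist A B = c)
    (hψa : ∠ B X C = ψ) (hψb : ∠ C X A = ψ)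
    (hψ1 : Real.pi / 2 < ψ) (hψ2 : ψ < Real.pi)
    (hΘ : Θ2 = c * Real.sqrt (4 * a ^ 2 - c ^ 2))
    (hden : c ^ 2 - Θ2 * Real.cot ψ ≠ 0) :
    dist C X = (c / 2) * ((1 - Real.cot ψ ^ 2) * Θ2 -
        2 * Real.cot ψ * (2 * a ^ 2 - c ^ 2)) / (c ^ 2 - Θ2 * Real.cot ψ) ∧
    (dist C X = 0 ↔ Real.cot ψ = -Real.sqrt (4 * a ^ 2 - c ^ 2) / c) :=
  isosceles_interior_point_general A B C X a c ψ Θ2 hc0 hBC hCA hAB hψa hψb hψ1 hΘ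
end
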